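/- Let n ≥ 1 be an integer with n > 2σ for some σ ∈ (0,1), let k ≥ 1 be an integer, and set m = 2k − σ. There exists a constant C > 0 depending only on n, k, σ such that for every r > 0, every u ∈ C_c^∞(ℝ^n) with support contained in the closed ball of radius r centered at the origin, every x ∈ ℝ^n with |x| > r, and every y > 0, one has |∫_{ℝ^n} ((−Δ)^k u)(ξ) (|x−ξ|² + y²)^{−(n−2σ)/2} dξ| ≤ C ((|x|−r)² + y²)^{−(n+m−σ)/2} ∫_{ℝ^n} |u(ξ)| dξ. -/

import Mathlib

open MeasureTheory Real

/-- The Laplacian on `ℝ^n`: sum of second partial derivatives. -/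
noncomputable def lap {n : ℕ} (f : EuclideanSpace ℝ (Fin n) → ℝ) :
    EuclideanSpace ℝ (Fin n) → ℝ :=
  fun x => ∑ i, fderiv ℝ (fun z => fderiv ℝ f z (EuclideanSpace.single i 1)) x
    (EuclideanSpace.single i 1)

/-- `(-Δ)^k u = (-1)^k Δ^k u`. -/
noncomputable def negLapPow {n : ℕ} (k : ℕ) (f : EuclideanSpace ℝ (Fin n) → ℝ) :
    EuclideanSpace ℝ (Fin n) → ℝ :=
  fun x => (-1 : ℝ) ^ k * (lap^[k] f) x

variable {n : ℕ}

/-- `Q x y z = ‖z - x‖² + y²`. -/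
noncomputable def Qf (x : EuclideanSpace ℝ (Fin n)) (y : ℝ) (z : EuclideanSpace ℝ (Fin n)) : ℝ :=
  ‖z - x‖ ^ 2 + y ^ 2

lemma Qf_pos {x : EuclideanSpace ℝ (Fin n)} {y : ℝ} (hy : 0 < y) (z) : 0 < Qf x y z := by
  have : (0:ℝ) < y ^ 2 := by positivity
  have h2 : (0:ℝ) ≤ ‖z - x‖ ^ 2 := by positivity
  unfold Qf; linarith

lemma hasFDerivAt_Qf (x : EuclideanSpace ℝ (Fin n)) (y : ℝ) (z : EuclideanSpace ℝ (Fin n)) :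
    HasFDerivAt (Qf x y) ((2:ℝ) • (innerSL ℝ (z - x))) z := by
  have h1 : HasFDerivAt (fun z : EuclideanSpace ℝ (Fin n) => z - x)
      (ContinuousLinearMap.id ℝ _) z := (hasFDerivAt_id z).sub_const x
  have h2 := h1.norm_sq
  have h3 := h2.add_const (y ^ 2)
  refine h3.congr_fderiv ?_
  ext v
  simp

lemma fderiv_Qf_apply (x : EuclideanSpace ℝ (Fin n)) (y : ℝ) (z : EuclideanSpace ℝ (Fin n))
    (i : Fin n) :
    ((2:ℝ) • (innerSL ℝ (z - x))) (EuclideanSpace.single i 1) = 2 * (z i - x i) := by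
  simp [EuclideanSpace.inner_single_right, real_inner_comm]

lemma sum_coord_sq (w : EuclideanSpace ℝ (Fin n)) : ∑ i, w i ^ 2 = ‖w‖ ^ 2 := by
  rw [EuclideanSpace.norm_eq]
  rw [Real.sq_sqrt (by positivity)]
  simp [sq_abs]

lemma lap_radial (x : EuclideanSpace ℝ (Fin n)) {y : ℝ} (hy : 0 < y)
    (φ φd φdd : ℝ → ℝ)
    (hd : ∀ p, 0 < p → HasDerivAt φ (φd p) p)
    (hdd : ∀ p, 0 < p → HasDerivAt φd (φdd p) p) (z₀ : EuclideanSpace ℝ (Fin n)) :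
    lap (fun z => φ (Qf x y z)) z₀ =
      4 * (Qf x y z₀ - y ^ 2) * φdd (Qf x y z₀) + 2 * n * φd (Qf x y z₀) := by
  have hF : ∀ z, HasFDerivAt (fun z => φ (Qf x y z))
      (φd (Qf x y z) • ((2:ℝ) • (innerSL ℝ (z - x)))) z := fun z =>
    (hd _ (Qf_pos hy z)).comp_hasFDerivAt z (hasFDerivAt_Qf x y z)
  have hG : ∀ i : Fin n, (fun z => fderiv ℝ (fun w => φ (Qf x y w)) z
      (EuclideanSpace.single i 1)) = fun z => φd (Qf x y z) * (2 * (z i - x i)) := by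
    intro i
    funext z
    rw [(hF z).fderiv]
    simp only [ContinuousLinearMap.coe_smul', Pi.smul_apply, smul_eq_mul]
    simp [EuclideanSpace.inner_single_right]
  have hlin : ∀ i : Fin n, HasFDerivAt (fun z : EuclideanSpace ℝ (Fin n) => 2 * (z i - x i))
      ((2:ℝ) • (EuclideanSpace.proj (𝕜 := ℝ) i)) z₀ := by
    intro i
    have := ((EuclideanSpace.proj (𝕜 := ℝ) (ι := Fin n) i).hasFDerivAt (x := z₀)).sub_const (x i)
    have h2 := this.const_mul (2:ℝ)
    exact h2
  have hGi : ∀ i : Fin n, HasFDerivAt (fun z => φd (Qf x y z) * (2 * (z i - x i)))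
      (φd (Qf x y z₀) • ((2:ℝ) • (EuclideanSpace.proj (𝕜 := ℝ) i)) +
        (2 * (z₀ i - x i)) • (φdd (Qf x y z₀) • ((2:ℝ) • (innerSL ℝ (z₀ - x))))) z₀ := by
    intro i
    have h1 : HasFDerivAt (fun z => φd (Qf x y z))
        (φdd (Qf x y z₀) • ((2:ℝ) • (innerSL ℝ (z₀ - x)))) z₀ :=
      (hdd _ (Qf_pos hy z₀)).comp_hasFDerivAt z₀ (hasFDerivAt_Qf x y z₀)
    exact h1.mul (hlin i)
  have key : ∀ i : Fin n, fderiv ℝ (fun z => fderiv ℝ (fun w => φ (Qf x y w)) z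
      (EuclideanSpace.single i 1)) z₀ (EuclideanSpace.single i 1) =
      φd (Qf x y z₀) * 2 + φdd (Qf x y z₀) * (2 * (z₀ i - x i)) ^ 2 := by
    intro i
    rw [hG i, (hGi i).fderiv]
    simp [fderiv_Qf_apply, EuclideanSpace.inner_single_right]
    ring
  unfold lap
  simp only [key]
  rw [Finset.sum_add_distrib]
  simp only [Finset.sum_const, Finset.card_univ, Fintype.card_fin, nsmul_eq_mul]
  have : ∑ i : Fin n, (2 * (z₀ i - x i)) ^ 2 = 4 * (Qf x y z₀ - y ^ 2) := by
    have h := sum_coord_sq (z₀ - x)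
    have hc : ∀ i, (z₀ - x) i = z₀ i - x i := fun i => rfl
    simp only [hc] at h
    unfold Qf
    rw [show ∑ i : Fin n, (2 * (z₀ i - x i)) ^ 2 = 4 * ∑ i, (z₀ i - x i)^2 by
      rw [Finset.mul_sum]; congr 1; funext i; ring]
    rw [h]; ring
  rw [← Finset.mul_sum, this]
  ring

noncomputable def ψf (y : ℝ) (a : ℕ) (t : ℝ) : ℝ → ℝ := fun p => (p - y^2)^a * p^t

noncomputable def φL (y : ℝ) (L : List (ℝ × ℕ × ℝ)) : ℝ → ℝ :=
  fun p => (L.map (fun c => c.1 * ψf y c.2.1 c.2.2 p)).sum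

def DL (L : List (ℝ × ℕ × ℝ)) : List (ℝ × ℕ × ℝ) :=
  L.flatMap fun c => [(c.1 * c.2.1, c.2.1 - 1, c.2.2), (c.1 * c.2.2, c.2.1, c.2.2 - 1)]

def lapL (n : ℕ) (L : List (ℝ × ℕ × ℝ)) : List (ℝ × ℕ × ℝ) :=
  ((DL (DL L)).map fun c => (4*c.1, c.2.1+1, c.2.2))
    ++ ((DL L).map fun c => (2*(n:ℝ)*c.1, c.2.1, c.2.2))

lemma hasDerivAt_ψf (y : ℝ) (a : ℕ) (t : ℝ) {p : ℝ} (hp : 0 < p) :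
    HasDerivAt (ψf y a t) ((a:ℝ) * ψf y (a-1) t p + t * ψf y a (t-1) p) p := by
  have h1 : HasDerivAt (fun p : ℝ => (p - y^2)^a) ((a:ℝ) * (p - y^2)^(a-1)) p := by
    exact (((hasDerivAt_id p).sub_const (y^2)).pow a).congr_deriv (by simp)
  have h2 : HasDerivAt (fun p : ℝ => p ^ t) (t * p ^ (t-1)) p :=
    Real.hasDerivAt_rpow_const (Or.inl hp.ne')
  have h3 := h1.mul h2
  refine h3.congr_deriv ?_
  unfold ψf; ring

lemma hasDerivAt_φL (y : ℝ) (L : List (ℝ × ℕ × ℝ)) {p : ℝ} (hp : 0 < p) :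
    HasDerivAt (φL y L) (φL y (DL L) p) p := by
  induction L with
  | nil => exact (hasDerivAt_const p (0:ℝ)).congr_deriv (by simp [φL, DL])
  | cons c L ih =>
    have h := ((hasDerivAt_ψf y c.2.1 c.2.2 hp).const_mul c.1).add ih
    refine h.congr_deriv ?_
    simp [φL, DL, List.flatMap_cons]
    ring

lemma φL_append (y : ℝ) (L1 L2 : List (ℝ × ℕ × ℝ)) (p : ℝ) :
    φL y (L1 ++ L2) p = φL y L1 p + φL y L2 p := by simp [φL]

lemma φL_map_shift (y k p : ℝ) (M : List (ℝ × ℕ × ℝ)) :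
    φL y (M.map fun c => (k*c.1, c.2.1+1, c.2.2)) p = k * ((p - y^2) * φL y M p) := by
  induction M with
  | nil => simp [φL]
  | cons c M ih =>
    simp only [List.map_cons, φL, List.sum_cons] at *
    rw [ih]
    simp [ψf, pow_succ]
    ring

lemma φL_map_scale (y k p : ℝ) (M : List (ℝ × ℕ × ℝ)) :
    φL y (M.map fun c => (k*c.1, c.2.1, c.2.2)) p = k * φL y M p := by
  induction M with
  | nil => simp [φL]
  | cons c M ih =>
    simp only [List.map_cons, φL, List.sum_cons] at *
    rw [ih]
    ring

lemma lap_φL (x : EuclideanSpace ℝ (Fin n)) {y : ℝ} (hy : 0 < y) (L : List (ℝ × ℕ × ℝ)) :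
    lap (fun z => φL y L (Qf x y z)) = fun z => φL y (lapL n L) (Qf x y z) := by
  funext z₀
  rw [lap_radial x hy (φL y L) (φL y (DL L)) (φL y (DL (DL L)))
    (fun p hp => hasDerivAt_φL y L hp) (fun p hp => hasDerivAt_φL y (DL L) hp) z₀]
  rw [lapL, φL_append, φL_map_shift, φL_map_scale]
  ring

lemma DL_invariant {d : ℝ} {L : List (ℝ × ℕ × ℝ)}
    (hL : ∀ c ∈ L, c.1 ≠ 0 → (c.2.1 : ℝ) + c.2.2 = d) :
    ∀ c ∈ DL L, c.1 ≠ 0 → (c.2.1 : ℝ) + c.2.2 = d - 1 := by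
  intro c hc hne
  rw [DL, List.mem_flatMap] at hc
  obtain ⟨b, hb, hcb⟩ := hc
  simp only [List.mem_cons, List.mem_singleton, List.not_mem_nil, or_false] at hcb
  rcases hcb with rfl | rfl
  · simp only [ne_eq, mul_eq_zero, not_or] at hne
    have hb1 : b.1 ≠ 0 := hne.1
    have ha : b.2.1 ≠ 0 := by
      intro h; exact hne.2 (by simp [h])
    have hd := hL b hb hb1
    have hcast : ((b.2.1 - 1 : ℕ) : ℝ) = (b.2.1 : ℝ) - 1 := by
      rw [Nat.cast_sub (Nat.one_le_iff_ne_zero.mpr ha)]; simp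
    simp only [hcast]
    linarith
  · simp only [ne_eq, mul_eq_zero, not_or] at hne
    have hd := hL b hb hne.1
    simp only []
    linarith

lemma lapL_invariant {d : ℝ} {L : List (ℝ × ℕ × ℝ)}
    (hL : ∀ c ∈ L, c.1 ≠ 0 → (c.2.1 : ℝ) + c.2.2 = d) :
    ∀ c ∈ lapL n L, c.1 ≠ 0 → (c.2.1 : ℝ) + c.2.2 = d - 1 := by
  have h1 := DL_invariant hL
  have h2 := DL_invariant h1
  intro c hc hne
  rw [lapL, List.mem_append] at hc
  rcases hc with hc | hc
  · rw [List.mem_map] at hc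
    obtain ⟨b, hb, rfl⟩ := hc
    simp only [ne_eq, mul_eq_zero, not_or] at hne
    have := h2 b hb hne.2
    push_cast
    linarith
  · rw [List.mem_map] at hc
    obtain ⟨b, hb, rfl⟩ := hc
    simp only [ne_eq, mul_eq_zero, not_or] at hne
    have := h1 b hb hne.2
    simp only []
    linarith

lemma rep_lemma (n : ℕ) (s : ℝ) (k : ℕ) :
    ∃ L : List (ℝ × ℕ × ℝ),
      (∀ c ∈ L, c.1 ≠ 0 → (c.2.1 : ℝ) + c.2.2 = -s - k) ∧
      ∀ (x : EuclideanSpace ℝ (Fin n)) (y : ℝ), 0 < y →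
        lap^[k] (fun z => (Qf x y z) ^ (-s)) = fun z => φL y L (Qf x y z) := by
  induction k with
  | zero =>
    refine ⟨[(1, 0, -s)], ?_, ?_⟩
    · intro c hc _; simp at hc; subst hc; simp
    · intro x y hy
      funext z
      simp [φL, ψf]
  | succ k ih =>
    obtain ⟨L, hinv, hrep⟩ := ih
    refine ⟨lapL n L, ?_, ?_⟩
    · intro c hc hne
      have := lapL_invariant hinv c hc hne
      push_cast
      push_cast at this
      linarith
    · intro x y hy
      rw [Function.iterate_succ_apply', hrep x y hy, lap_φL x hy L]

lemma hcs_sum {ι α β : Type*} [TopologicalSpace α] [AddCommMonoid β] (s : Finset ι)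
    (g : ι → α → β) (h : ∀ i ∈ s, HasCompactSupport (g i)) :
    HasCompactSupport fun x => ∑ i ∈ s, g i x := by
  classical
  induction s using Finset.induction_on with
  | empty => simp [HasCompactSupport, tsupport]
  | insert a s hnotmem ih =>
    simp only [Finset.sum_insert hnotmem]
    exact (h _ (Finset.mem_insert_self _ _)).add (ih fun i hi => h _ (Finset.mem_insert_of_mem hi))

lemma contDiff_D {f : EuclideanSpace ℝ (Fin n) → ℝ} (hf : ContDiff ℝ (⊤ : ℕ∞) f)
    (v : EuclideanSpace ℝ (Fin n)) : ContDiff ℝ (⊤ : ℕ∞) (fun z => fderiv ℝ f z v) :=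
  (hf.fderiv_right (by simp)).clm_apply contDiff_const

lemma intg_mul_left {a b : EuclideanSpace ℝ (Fin n) → ℝ} (ha : Continuous a)
    (hb : Continuous b) (hbc : HasCompactSupport b) :
    Integrable (fun z => a z * b z) := by
  apply Continuous.integrable_of_hasCompactSupport (ha.mul hb)
  exact hbc.mul_left

lemma intg_mul_right {a b : EuclideanSpace ℝ (Fin n) → ℝ} (ha : Continuous a)
    (hb : Continuous b) (hac : HasCompactSupport a) :
    Integrable (fun z => a z * b z) := by
  apply Continuous.integrable_of_hasCompactSupport (ha.mul hb)
  exact hac.mul_right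

lemma ibp_step {f K : EuclideanSpace ℝ (Fin n) → ℝ} (hf : ContDiff ℝ (⊤ : ℕ∞) f)
    (hfc : HasCompactSupport f) (hK : ContDiff ℝ (⊤ : ℕ∞) K) (v : EuclideanSpace ℝ (Fin n)) :
    ∫ z, fderiv ℝ (fun w => fderiv ℝ f w v) z v * K z
      = ∫ z, f z * fderiv ℝ (fun w => fderiv ℝ K w v) z v := by
  set Df := fun w => fderiv ℝ f w v with hDf
  set DK := fun w => fderiv ℝ K w v with hDK
  have hDfc : ContDiff ℝ (⊤ : ℕ∞) Df := contDiff_D hf v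
  have hDKc : ContDiff ℝ (⊤ : ℕ∞) DK := contDiff_D hK v
  have hfcs : HasCompactSupport Df := hfc.fderiv_apply ℝ v
  have hDfcs : HasCompactSupport (fun z => fderiv ℝ Df z v) := hfcs.fderiv_apply ℝ v
  have A : ∫ z, K z * fderiv ℝ Df z v = - ∫ z, fderiv ℝ K z v * Df z :=
    integral_mul_fderiv_eq_neg_fderiv_mul_of_integrable
      (intg_mul_left (contDiff_D hK v).continuous hDfc.continuous hfcs)
      (intg_mul_left hK.continuous (contDiff_D hDfc v).continuous hDfcs)
      (intg_mul_left hK.continuous hDfc.continuous hfcs)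
      (fun x _ => hK.differentiable (by simp) x) (fun x _ => hDfc.differentiable (by simp) x)
  have B : ∫ z, f z * fderiv ℝ DK z v = - ∫ z, fderiv ℝ f z v * DK z :=
    integral_mul_fderiv_eq_neg_fderiv_mul_of_integrable
      (intg_mul_right (contDiff_D hf v).continuous hDKc.continuous hfcs)
      (intg_mul_right hf.continuous (contDiff_D hDKc v).continuous hfc)
      (intg_mul_right hf.continuous hDKc.continuous hfc)
      (fun x _ => hf.differentiable (by simp) x) (fun x _ => hDKc.differentiable (by simp) x)
  rw [show (fun z => fderiv ℝ Df z v * K z) = (fun z => K z * fderiv ℝ Df z v)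
    from funext fun z => mul_comm _ _]
  rw [A, B]
  congr 1
  congr 1
  exact funext fun z => mul_comm _ _

lemma contDiff_lap {f : EuclideanSpace ℝ (Fin n) → ℝ} (hf : ContDiff ℝ (⊤ : ℕ∞) f) :
    ContDiff ℝ (⊤ : ℕ∞) (lap f) := by
  apply ContDiff.sum (fun i _ => ?_)
  have h1 : ContDiff ℝ (⊤ : ℕ∞) (fun z => fderiv ℝ f z (EuclideanSpace.single i 1)) :=
    (hf.fderiv_right (by simp)).clm_apply contDiff_const
  exact (h1.fderiv_right (by simp)).clm_apply contDiff_const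

lemma contDiff_lap_iter {f : EuclideanSpace ℝ (Fin n) → ℝ} (hf : ContDiff ℝ (⊤ : ℕ∞) f) (j : ℕ) :
    ContDiff ℝ (⊤ : ℕ∞) (lap^[j] f) := by
  induction j with
  | zero => exact hf
  | succ j ih => rw [Function.iterate_succ_apply']; exact contDiff_lap ih

lemma hcs_lap {f : EuclideanSpace ℝ (Fin n) → ℝ} (hf : HasCompactSupport f) :
    HasCompactSupport (lap f) := by
  apply hcs_sum
  intro i _
  exact (hf.fderiv_apply ℝ _).fderiv_apply ℝ _

lemma hcs_lap_iter {f : EuclideanSpace ℝ (Fin n) → ℝ} (hf : HasCompactSupport f) (j : ℕ) :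
    HasCompactSupport (lap^[j] f) := by
  induction j with
  | zero => exact hf
  | succ j ih => rw [Function.iterate_succ_apply']; exact hcs_lap ih

lemma ibp_lap {f K : EuclideanSpace ℝ (Fin n) → ℝ} (hf : ContDiff ℝ (⊤ : ℕ∞) f)
    (hfc : HasCompactSupport f) (hK : ContDiff ℝ (⊤ : ℕ∞) K) :
    ∫ z, lap f z * K z = ∫ z, f z * lap K z := by
  have h1 : ∫ z, lap f z * K z = ∑ i : Fin n, ∫ z,
      fderiv ℝ (fun w => fderiv ℝ f w (EuclideanSpace.single i 1)) z
        (EuclideanSpace.single i 1) * K z := by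
    rw [← integral_finset_sum]
    · congr 1; funext z; rw [show lap f z = ∑ i : Fin n,
        fderiv ℝ (fun w => fderiv ℝ f w (EuclideanSpace.single i 1)) z
          (EuclideanSpace.single i 1) from rfl, Finset.sum_mul]
    · intro i _
      exact intg_mul_right (contDiff_D (contDiff_D hf _) _).continuous hK.continuous
        ((hfc.fderiv_apply ℝ _).fderiv_apply ℝ _)
  have h2 : ∫ z, f z * lap K z = ∑ i : Fin n, ∫ z, f z *
      fderiv ℝ (fun w => fderiv ℝ K w (EuclideanSpace.single i 1)) z
        (EuclideanSpace.single i 1) := by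
    rw [← integral_finset_sum]
    · congr 1; funext z; rw [show lap K z = ∑ i : Fin n,
        fderiv ℝ (fun w => fderiv ℝ K w (EuclideanSpace.single i 1)) z
          (EuclideanSpace.single i 1) from rfl, Finset.mul_sum]
    · intro i _
      exact intg_mul_right hf.continuous (contDiff_D (contDiff_D hK _) _).continuous hfc
  rw [h1, h2]
  exact Finset.sum_congr rfl fun i _ => ibp_step hf hfc hK _

lemma ibp_iter {f : EuclideanSpace ℝ (Fin n) → ℝ} (k : ℕ) (hf : ContDiff ℝ (⊤ : ℕ∞) f)
    (hfc : HasCompactSupport f) :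
    ∀ K : EuclideanSpace ℝ (Fin n) → ℝ, ContDiff ℝ (⊤ : ℕ∞) K →
    ∫ z, lap^[k] f z * K z = ∫ z, f z * lap^[k] K z := by
  induction k with
  | zero => intro K _; rfl
  | succ k ih =>
    intro K hK
    have e1 : ∫ z, lap^[k+1] f z * K z = ∫ z, lap (lap^[k] f) z * K z := by
      rw [Function.iterate_succ_apply']
    rw [e1, ibp_lap (contDiff_lap_iter hf k) (hcs_lap_iter hfc k) hK, ih (lap K) (contDiff_lap hK)]
    rw [Function.iterate_succ_apply]

lemma ψf_bound {y p : ℝ} (hy : 0 < y) (hp : y^2 ≤ p) (a : ℕ) (t : ℝ) :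
    |ψf y a t p| ≤ p ^ ((a:ℝ) + t) := by
  have hp0 : 0 < p := lt_of_lt_of_le (by positivity) hp
  have hsub : (0:ℝ) ≤ p - y^2 := by linarith
  unfold ψf
  rw [abs_mul, abs_of_nonneg (pow_nonneg hsub a), abs_of_pos (Real.rpow_pos_of_pos hp0 t)]
  calc (p - y^2)^a * p ^ t ≤ p^a * p ^ t := by
        exact mul_le_mul_of_nonneg_right (pow_le_pow_left₀ hsub (sub_le_self p (by positivity)) a)
          (Real.rpow_nonneg hp0.le t)
    _ = p ^ ((a:ℝ) + t) := by
        rw [← Real.rpow_natCast p a, ← Real.rpow_add hp0]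

lemma φL_bound {d : ℝ} {L : List (ℝ × ℕ × ℝ)}
    (hL : ∀ c ∈ L, c.1 ≠ 0 → (c.2.1 : ℝ) + c.2.2 = d)
    {y p : ℝ} (hy : 0 < y) (hp : y^2 ≤ p) :
    |φL y L p| ≤ (L.map (fun c => |c.1|)).sum * p ^ d := by
  induction L with
  | nil => simp [φL]
  | cons c L ih =>
    have hL' := fun b hb h => hL b (List.mem_cons_of_mem _ hb) h
    have ihh := ih hL'
    have hp0 : 0 < p := lt_of_lt_of_le (by positivity) hp
    simp only [φL, List.map_cons, List.sum_cons] at *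
    refine (abs_add_le _ _).trans ?_
    rw [add_mul]
    gcongr
    rcases eq_or_ne c.1 0 with h0 | h0
    · simp [h0]
    · rw [abs_mul]
      have hbd := ψf_bound hy hp c.2.1 c.2.2
      rw [hL c List.mem_cons_self h0] at hbd
      exact mul_le_mul_of_nonneg_left hbd (abs_nonneg _)

lemma contDiff_Qf (x : EuclideanSpace ℝ (Fin n)) (y : ℝ) : ContDiff ℝ (⊤ : ℕ∞) (Qf x y) := by
  unfold Qf
  exact ((contDiff_id.sub contDiff_const).norm_sq ℝ).add contDiff_const

lemma contDiff_kernel (x : EuclideanSpace ℝ (Fin n)) {y : ℝ} (hy : 0 < y) (s : ℝ) :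
    ContDiff ℝ (⊤ : ℕ∞) (fun z => (Qf x y z) ^ (-s)) := by
  rw [contDiff_iff_contDiffAt]
  intro z
  exact (Real.contDiffAt_rpow_const_of_ne (Qf_pos hy z).ne').comp z (contDiff_Qf x y).contDiffAt

theorem stmt_2 (n k : ℕ) (hn : 1 ≤ n) (hk : 1 ≤ k) (σ : ℝ)
    (hσ : σ ∈ Set.Ioo (0:ℝ) 1) (hnσ : 2 * σ < n) :
    ∃ C : ℝ, 0 < C ∧
      ∀ (r : ℝ), 0 < r →
      ∀ u : EuclideanSpace ℝ (Fin n) → ℝ, ContDiff ℝ (⊤ : ℕ∞) u → HasCompactSupport u →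
        tsupport u ⊆ Metric.closedBall 0 r →
      ∀ x : EuclideanSpace ℝ (Fin n), r < ‖x‖ →
      ∀ y : ℝ, 0 < y →
        |∫ ξ, negLapPow k u ξ *
            (‖x - ξ‖ ^ 2 + y ^ 2) ^ (-((n : ℝ) - 2 * σ) / 2)| ≤
          C * ((‖x‖ - r) ^ 2 + y ^ 2) ^ (-((n : ℝ) + (2 * k - σ) - σ) / 2) *
            ∫ ξ, |u ξ| := by
  obtain ⟨hσ0, hσ1⟩ := hσ
  set s : ℝ := ((n:ℝ) - 2*σ)/2 with hs
  have hs0 : 0 < s := by rw [hs]; linarith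
  obtain ⟨L, hinv, hrep⟩ := rep_lemma n s k
  set S : ℝ := (L.map (fun c => |c.1|)).sum with hS
  have hS0 : 0 ≤ S := by
    rw [hS]
    apply List.sum_nonneg
    intro a ha
    simp only [List.mem_map] at ha
    obtain ⟨b, _, rfl⟩ := ha
    exact abs_nonneg _
  refine ⟨S + 1, by linarith, ?_⟩
  intro r hr u hu hcu hsupp x hx y hy
  set B : ℝ := (‖x‖ - r)^2 + y^2 with hB
  have hB0 : 0 < B := by rw [hB]; positivity
  set G : EuclideanSpace ℝ (Fin n) → ℝ := lap^[k] (fun z => (Qf x y z) ^ (-s)) with hG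
  have hGrep : G = fun z => φL y L (Qf x y z) := hrep x y hy
  have hGcont : Continuous G := (contDiff_lap_iter (contDiff_kernel x hy s) k).continuous
  have hexp : -s - (k:ℝ) = -((n : ℝ) + (2 * k - σ) - σ) / 2 := by
    rw [hs]; push_cast; ring
  -- rewrite the integral
  have h1 : ∫ ξ, negLapPow k u ξ * (‖x - ξ‖ ^ 2 + y ^ 2) ^ (-((n : ℝ) - 2 * σ) / 2)
      = (-1:ℝ)^k * ∫ ξ, lap^[k] u ξ * (Qf x y ξ) ^ (-s) := by
    rw [← integral_const_mul]
    congr 1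
    funext ξ
    rw [negLapPow]
    have : (‖x - ξ‖ ^ 2 + y ^ 2) ^ (-((n : ℝ) - 2 * σ) / 2) = (Qf x y ξ) ^ (-s) := by
      rw [norm_sub_rev]
      congr 1
      rw [hs]; ring
    rw [this]
    ring
  have h2 : ∫ ξ, lap^[k] u ξ * (Qf x y ξ) ^ (-s) = ∫ ξ, u ξ * G ξ :=
    ibp_iter k hu hcu _ (contDiff_kernel x hy s)
  rw [h1, h2, abs_mul, abs_pow, abs_neg, abs_one, one_pow, one_mul]
  -- pointwise bound
  set M : ℝ := S * B ^ (-s - (k:ℝ)) with hM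
  have hM0 : 0 ≤ M := by
    rw [hM]
    exact mul_nonneg hS0 (Real.rpow_pos_of_pos hB0 _).le
  have hpt : ∀ ξ, |u ξ * G ξ| ≤ |u ξ| * M := by
    intro ξ
    by_cases hmem : ξ ∈ tsupport u
    · have hnorm : ‖ξ‖ ≤ r := mem_closedBall_zero_iff.mp (hsupp hmem)
      have h4 : ‖x‖ - r ≤ ‖ξ - x‖ := by
        have h5 := norm_sub_norm_le x ξ
        rw [norm_sub_rev]
        linarith
      have h5 : 0 ≤ ‖x‖ - r := by linarith
      have hQB : B ≤ Qf x y ξ := by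
        rw [hB]
        unfold Qf
        have := pow_le_pow_left₀ h5 h4 2
        linarith
      have hyQ : y^2 ≤ Qf x y ξ := by
        unfold Qf
        have : (0:ℝ) ≤ ‖ξ - x‖^2 := by positivity
        linarith
      have hGb : |G ξ| ≤ S * (Qf x y ξ) ^ (-s - (k:ℝ)) := by
        rw [hGrep]
        have := φL_bound (d := -s - (k:ℝ)) (by exact_mod_cast hinv) hy hyQ
        exact this
      have hQB2 : (Qf x y ξ) ^ (-s - (k:ℝ)) ≤ B ^ (-s - (k:ℝ)) := by
        apply Real.rpow_le_rpow_of_nonpos hB0 hQB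
        have : (0:ℝ) ≤ (k:ℝ) := Nat.cast_nonneg k
        linarith
      rw [abs_mul]
      apply mul_le_mul_of_nonneg_left _ (abs_nonneg (u ξ))
      rw [hM]
      calc |G ξ| ≤ S * (Qf x y ξ) ^ (-s - (k:ℝ)) := hGb
        _ ≤ S * B ^ (-s - (k:ℝ)) := mul_le_mul_of_nonneg_left hQB2 hS0
    · rw [image_eq_zero_of_notMem_tsupport hmem]
      simp [hM0]
  have intg1 : Integrable (fun ξ => |u ξ * G ξ|) :=
    (intg_mul_right hu.continuous hGcont hcu).abs
  have intg2 : Integrable (fun ξ => |u ξ| * M) :=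
    (hu.continuous.abs.integrable_of_hasCompactSupport hcu.abs).mul_const M
  calc |∫ ξ, u ξ * G ξ| ≤ ∫ ξ, |u ξ * G ξ| := by
        rw [← Real.norm_eq_abs]
        exact (norm_integral_le_integral_norm _).trans (le_of_eq (by simp [Real.norm_eq_abs, abs_mul]))
    _ ≤ ∫ ξ, |u ξ| * M := integral_mono intg1 intg2 hpt
    _ = M * ∫ ξ, |u ξ| := by rw [integral_mul_const]; ring
    _ ≤ (S + 1) * ((‖x‖ - r) ^ 2 + y ^ 2) ^ (-((n : ℝ) + (2 * k - σ) - σ) / 2) * ∫ ξ, |u ξ| := by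
        rw [hM, ← hexp, ← hB]
        have hint : 0 ≤ ∫ ξ, |u ξ| := integral_nonneg fun ξ => abs_nonneg _
        have hpow : 0 < B ^ (-s - (k:ℝ)) := Real.rpow_pos_of_pos hB0 _
        nlinarith [mul_nonneg hpow.le hint]
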